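/- (Alternating partial sum formula) Assume a − b + 1 ≠ 0. Then for every natural number n: Σ_{k=0}^{n} (−1)^k·G k = (1/(a − b + 1)) · ( (a + 1)·G 0 − G 1 + (−1)^n·(G(n+1) − b·G n) + c·d²·Σ_{k=0}^{n−1} (−d)^k ). -/

import Mathlib

/-!
Multiplied by `(-1)^k`, the recurrence says that the quantities `(-1)^k (G (k+1) - b G k)`
telescope, with increments `(-1)^(k+1) (a - b + 1) G (k+1)` up to the forcing term; summing
over `k` gives `a - b + 1` times the alternating sum in closed form.
-/

theorem mul_sum_range_neg_one_pow_mul_of_recurrence {R : Type*} [CommRing R] (a b : R)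
    (G f : ℕ → R) (hG : ∀ n, G (n + 2) = a * G (n + 1) + b * G n + f n) (n : ℕ) :
    (a - b + 1) * ∑ k ∈ Finset.range (n + 1), (-1) ^ k * G k
      = (a + 1) * G 0 - G 1 + (-1) ^ n * (G (n + 1) - b * G n)
        + ∑ k ∈ Finset.range n, (-1) ^ k * f k := by
  induction n with
  | zero => simp only [zero_add, Finset.sum_range_one, Finset.sum_range_zero, pow_zero]; ring
  | succ n ih =>
    rw [Finset.sum_range_succ, mul_add, ih, Finset.sum_range_succ (n := n), hG n]
    ring

theorem stmt_13_general (a b c d : ℝ) (hab : a - b + 1 ≠ 0)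
    (G : ℕ → ℝ)
    (hG : ∀ n : ℕ, 2 ≤ n → G n = a * G (n-1) + b * G (n-2) + c * d^n) :
    ∀ n : ℕ, ∑ k ∈ Finset.range (n+1), (-1:ℝ)^k * G k
      = (1 / (a - b + 1)) *
        ((a + 1) * G 0 - G 1 + (-1:ℝ)^n * (G (n+1) - b * G n)
          + c * d^2 * ∑ k ∈ Finset.range n, (-d)^k) := by
  intro n
  have hrec : ∀ k, G (k + 2) = a * G (k + 1) + b * G k + c * d ^ (k + 2) := fun k => by
    simpa using hG (k + 2) (by omega)
  have hforcing : ∑ k ∈ Finset.range n, (-1) ^ k * (c * d ^ (k + 2))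
      = c * d ^ 2 * ∑ k ∈ Finset.range n, (-d) ^ k := by
    rw [Finset.mul_sum]
    refine Finset.sum_congr rfl fun k _ => ?_
    rw [neg_pow]
    ring
  rw [← hforcing, ← mul_sum_range_neg_one_pow_mul_of_recurrence a b G _ hrec n, one_div,
    inv_mul_cancel_left₀ hab]

theorem stmt_13 (a b c d : ℝ) (ha : 0 < a) (hb : 0 < b) (hc : 0 ≤ c) (hd : 0 ≤ d)
    (hden : d^2 - a*d - b ≠ 0) (hab : a - b + 1 ≠ 0)
    (G : ℕ → ℝ)
    (hG : ∀ n : ℕ, 2 ≤ n → G n = a * G (n-1) + b * G (n-2) + c * d^n) :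
    ∀ n : ℕ, ∑ k ∈ Finset.range (n+1), (-1:ℝ)^k * G k
      = (1 / (a - b + 1)) *
        ((a + 1) * G 0 - G 1 + (-1:ℝ)^n * (G (n+1) - b * G n)
          + c * d^2 * ∑ k ∈ Finset.range n, (-d)^k) :=
  stmt_13_general a b c d hab G hG
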